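/- arXiv:1008.3786 — 4 statements merged into one kernel-verified Lean document; each statement's English description precedes it below -/
import Mathlib

section
/- Let R, M, X be finite sets with M overlapping R, X ∩ R ≠ ∅, |R| ≤ |X| ≤ |M|, and suppose X does not overlap R. Then X overlaps M or X = M. (Dahlhaus's key lemma: any set intersecting R whose size lies between |R| and |Max(R)| overlaps R or Max(R).) -/
/-! Sets that meet without overlapping are nested. Since `|R| ≤ |X|`, the set `X` cannot be a
proper subset of `R`, so either `X = R`, which overlaps `M`, or `R ⊆ X`. In the latter case `X`
inherits from `R` a point of `M` and a point outside `M`, so it overlaps `M` unless `M ⊆ X`,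
and then `|X| ≤ |M|` forces `X = M`. -/

def Overlaps {α : Type*} [DecidableEq α] (A B : Finset α) : Prop :=
  (A ∩ B).Nonempty ∧ (A \ B).Nonempty ∧ (B \ A).Nonempty

namespace Overlaps

variable {α : Type*} [DecidableEq α] {A B C : Finset α}

theorem symm (h : Overlaps A B) : Overlaps B A :=
  ⟨Finset.inter_comm A B ▸ h.1, h.2.2, h.2.1⟩

theorem subset_or_superset_of_not (hAB : (A ∩ B).Nonempty) (h : ¬ Overlaps A B) :
    A ⊆ B ∨ B ⊆ A := by
  simp only [Overlaps, hAB, Finset.sdiff_nonempty, true_and, not_and_or, not_not] at h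
  exact h

theorem of_subset_of_not_subset (h : Overlaps A B) (hBC : B ⊆ C) (hAC : ¬ A ⊆ C) :
    Overlaps C A := by
  obtain ⟨hinter, -, hBA⟩ := h
  refine ⟨?_, ?_, Finset.sdiff_nonempty.mpr hAC⟩
  · rw [Finset.inter_comm]
    exact hinter.mono (Finset.inter_subset_inter_left hBC)
  · exact hBA.mono (Finset.sdiff_subset_sdiff hBC le_rfl)

end Overlaps

theorem stmt4 {α : Type*} [DecidableEq α] (R M X : Finset α)
    (hMR : Overlaps M R)
    (hXR : X ∩ R ≠ ∅)
    (h1 : R.card ≤ X.card) (h2 : X.card ≤ M.card)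
    (hnot : ¬ Overlaps X R) :
    Overlaps X M ∨ X = M := by
  rcases Overlaps.subset_or_superset_of_not (Finset.nonempty_iff_ne_empty.mpr hXR) hnot
    with hXsubR | hRsubX
  · obtain rfl : X = R := Finset.eq_of_subset_of_card_le hXsubR h1
    exact Or.inl hMR.symm
  · by_cases hMsubX : M ⊆ X
    · exact Or.inr (Finset.eq_of_subset_of_card_le hMsubX h2).symm
    · exact Or.inl (hMR.of_subset_of_not_subset hRsubX hMsubX)
end

section
/- If two sets A and B overlap and both are intervals of a linear order on C, then A ∩ B, A \ B, and B \ A are all intervals of that order, and moreover A ∩ B lies between A \ B and B \ A: either every element of A \ B precedes every element of A ∩ B which precedes every element of B \ A, or the reverse. -/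
def IsIntervalOf {α : Type*} (r : α → α → Prop) (S : Finset α) : Prop :=
  ∀ x y z, r x y → r y z → x ∈ S → z ∈ S → y ∈ S

/-! A point of `B \ A` never lies between two points of `A`, nor a point of `A \ B` between two
points of `B`. By totality this puts every point of `A ∩ B` between `a ∈ A \ B` and `b ∈ B \ A`
whenever `r a b`, and a single such pair `a₀, b₀` forces every pair into that orientation.
Reversing the order exchanges the roles of `A \ B` and `B \ A`. -/

namespace IsIntervalOf

open Finset

variable {α : Type*} {r : α → α → Prop}

theorem swap {S : Finset α} (hS : IsIntervalOf r S) : IsIntervalOf (Function.swap r) S :=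
  fun x y z hxy hyz hx hz => hS z y x hyz hxy hz hx

variable [DecidableEq α] {A B : Finset α}

theorem inter (hA : IsIntervalOf r A) (hB : IsIntervalOf r B) : IsIntervalOf r (A ∩ B) :=
  fun x y z hxy hyz hx hz =>
    mem_inter.2 ⟨hA x y z hxy hyz (mem_inter.1 hx).1 (mem_inter.1 hz).1,
      hB x y z hxy hyz (mem_inter.1 hx).2 (mem_inter.1 hz).2⟩

variable [Std.Total r]

theorem sdiff (hA : IsIntervalOf r A) (hB : IsIntervalOf r B) {b : α} (hb : b ∈ B \ A) :
    IsIntervalOf r (A \ B) := by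
  obtain ⟨hbB, hbA⟩ := mem_sdiff.1 hb
  intro x y z hxy hyz hx hz
  obtain ⟨hxA, hxB⟩ := mem_sdiff.1 hx
  obtain ⟨hzA, hzB⟩ := mem_sdiff.1 hz
  refine mem_sdiff.2 ⟨hA x y z hxy hyz hxA hzA, fun hyB => ?_⟩
  rcases total_of r b x with hbx | hxb
  · exact hxB (hB b x y hbx hxy hbB hyB)
  rcases total_of r z b with hzb | hbz
  · exact hzB (hB y z b hyz hzb hyB hbB)
  · exact hbA (hA x b z hxb hbz hxA hzA)

theorem rel_of_rel_of_mem_sdiff (hA : IsIntervalOf r A) (hB : IsIntervalOf r B) {a b x : α}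
    (hab : r a b) (ha : a ∈ A \ B) (hb : b ∈ B \ A) (hx : x ∈ A ∩ B) : r a x ∧ r x b := by
  obtain ⟨haA, haB⟩ := mem_sdiff.1 ha
  obtain ⟨hbB, hbA⟩ := mem_sdiff.1 hb
  obtain ⟨hxA, hxB⟩ := mem_inter.1 hx
  exact ⟨(total_of r a x).resolve_right fun hxa => haB (hB x a b hxa hab hxB hbB),
    (total_of r x b).resolve_right fun hbx => hbA (hA a b x hab hbx haA hxA)⟩

theorem rel_of_rel_of_mem_inter (hA : IsIntervalOf r A) (hB : IsIntervalOf r B) {a₀ b₀ a x : α}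
    (hab₀ : r a₀ b₀) (ha₀ : a₀ ∈ A \ B) (hb₀ : b₀ ∈ B \ A) (hx : x ∈ A ∩ B) (ha : a ∈ A \ B) :
    r a x := by
  rcases total_of r a b₀ with hab | hba
  · exact (rel_of_rel_of_mem_sdiff hA hB hab ha hb₀ hx).1
  · have hxb₀ := (rel_of_rel_of_mem_sdiff hA hB hab₀ ha₀ hb₀ hx).2
    exact absurd (hA x b₀ a hxb₀ hba (mem_inter.1 hx).1 (mem_sdiff.1 ha).1) (mem_sdiff.1 hb₀).2

theorem layout_of_rel (hA : IsIntervalOf r A) (hB : IsIntervalOf r B) {a₀ b₀ : α}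
    (hab₀ : r a₀ b₀) (ha₀ : a₀ ∈ A \ B) (hb₀ : b₀ ∈ B \ A) :
    ∀ a ∈ A \ B, ∀ x ∈ A ∩ B, ∀ b ∈ B \ A, r a x ∧ r x b := fun _ ha _ hx _ hb =>
  ⟨rel_of_rel_of_mem_inter hA hB hab₀ ha₀ hb₀ hx ha,
    rel_of_rel_of_mem_inter (r := Function.swap r) hB.swap hA.swap hab₀ hb₀ ha₀
      (inter_comm A B ▸ hx) hb⟩

end IsIntervalOf

/-- Two overlapping intervals force the layout `(A\B)(A∩B)(B\A)` or its reversal. -/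
theorem stmt12 {α : Type*} [DecidableEq α] (r : α → α → Prop)
    (hr : IsLinearOrder α r) (A B : Finset α) (hAB : Overlaps A B)
    (hA : IsIntervalOf r A) (hB : IsIntervalOf r B) :
    IsIntervalOf r (A ∩ B) ∧ IsIntervalOf r (A \ B) ∧ IsIntervalOf r (B \ A) ∧
    ((∀ a ∈ A \ B, ∀ x ∈ A ∩ B, ∀ b ∈ B \ A, r a x ∧ r x b) ∨
     (∀ b ∈ B \ A, ∀ x ∈ A ∩ B, ∀ a ∈ A \ B, r b x ∧ r x a)) := by
  have := hr
  obtain ⟨-, ⟨a₀, ha₀⟩, ⟨b₀, hb₀⟩⟩ := hAB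
  refine ⟨hA.inter hB, hA.sdiff hB hb₀, hB.sdiff hA ha₀, ?_⟩
  rcases total_of r a₀ b₀ with hab₀ | hba₀
  · exact Or.inl (hA.layout_of_rel hB hab₀ ha₀ hb₀)
  · rw [Finset.inter_comm]
    exact Or.inr (hB.layout_of_rel hA hba₀ hb₀ ha₀)
end

section
/- If the columns of a 0-1 matrix whose rows are sorted in decreasing size order are sorted lexicographically, then for every row R, the refinement process ordering claim holds: equal columns lie in the same part of the final partition obtained by successively refining the trivial partition by each row in decreasing size order, and the parts appear in lexicographic order of the columns. -/
open List

/-- Refine an ordered partition (list of parts) by a set `S`: each part `P`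
is replaced by `P \ S` followed by `P ∩ S`, dropping empty parts. -/
def refineStep {α : Type*} [DecidableEq α] (P : List (Finset α)) (S : Finset α) :
    List (Finset α) :=
  P.flatMap fun Q => [Q \ S, Q ∩ S].filter fun T => T.Nonempty

/-- The membership vector of a column `c`: its 0-1 row pattern, rows in LR order. -/
def colVec {α : Type*} [DecidableEq α] (m : ℕ) (R : Fin m → Finset α) (c : α) : Fin m → Bool :=
  fun i => decide (c ∈ R i)

/-- Strict lexicographic order on column vectors (with `false < true`). -/
def LexLt {m : ℕ} (f g : Fin m → Bool) : Prop :=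
  ∃ i : Fin m, (∀ j : Fin m, j < i → f j = g j) ∧ f i = false ∧ g i = true

/-
After refining by the first `k` rows, every part consists of columns with the same membership
pattern on those rows, and the parts are strictly increasing in the lexicographic order of these
patterns. Refining by the next row `S` splits a part `Q` into `Q \ S` (pattern extended by `false`)
followed by `Q ∩ S` (extended by `true`), which preserves both properties. With all rows processed,
the patterns are the full column vectors; as distinct parts carry distinct vectors, equal columns
must share a part.
-/

section Refinement

variable {α : Type*} [DecidableEq α]

def memPattern (Rs : List (Finset α)) (c : α) : List Bool := Rs.map fun S => decide (c ∈ S)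

def BoolListLexLt (a b : List Bool) : Prop :=
  ∃ n, a.take n = b.take n ∧ a[n]? = some false ∧ b[n]? = some true

lemma memPattern_append_singleton (Rs : List (Finset α)) (S : Finset α) (c : α) :
    memPattern (Rs ++ [S]) c = memPattern Rs c ++ [decide (c ∈ S)] := by
  simp [memPattern]

lemma memPattern_ofFn {m : ℕ} (R : Fin m → Finset α) (c : α) :
    memPattern (List.ofFn R) c = List.ofFn (colVec m R c) := by
  rw [memPattern, List.map_ofFn]
  rfl

namespace BoolListLexLt

lemma ne {a b : List Bool} (h : BoolListLexLt a b) : a ≠ b := by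
  obtain ⟨n, -, ha, hb⟩ := h
  rintro rfl
  simp [ha] at hb

lemma append_singleton {a b : List Bool} (h : BoolListLexLt a b) (x y : Bool) :
    BoolListLexLt (a ++ [x]) (b ++ [y]) := by
  obtain ⟨n, ht, ha, hb⟩ := h
  have hna : n < a.length := (List.getElem?_eq_some_iff.1 ha).1
  have hnb : n < b.length := (List.getElem?_eq_some_iff.1 hb).1
  refine ⟨n, ?_, ?_, ?_⟩
  · rw [List.take_append_of_le_length hna.le, List.take_append_of_le_length hnb.le, ht]
  · rwa [List.getElem?_append_left hna]
  · rwa [List.getElem?_append_left hnb]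

lemma append_false_true (a : List Bool) : BoolListLexLt (a ++ [false]) (a ++ [true]) :=
  ⟨a.length, by simp, by simp, by simp⟩

lemma lexLt_of_ofFn {m : ℕ} {f g : Fin m → Bool}
    (h : BoolListLexLt (List.ofFn f) (List.ofFn g)) : LexLt f g := by
  obtain ⟨n, ht, hf, hg⟩ := h
  rw [List.getElem?_ofFn] at hf hg
  split at hf
  case isFalse => simp at hf
  case isTrue hn =>
    rw [dif_pos hn] at hg
    refine ⟨⟨n, hn⟩, fun j hj => ?_, by simpa using hf, by simpa using hg⟩
    have hj' := congrArg (·[(j : ℕ)]?) ht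
    simpa [List.getElem?_take_of_lt (show (j : ℕ) < n from hj)] using hj'

end BoolListLexLt

structure IsSortedPatternPartition (C : Finset α) (Rs L : List (Finset α)) : Prop where
  cover : ∀ c ∈ C, ∃ P ∈ L, c ∈ P
  pattern_eq : ∀ P ∈ L, ∀ c ∈ P, ∀ d ∈ P, memPattern Rs c = memPattern Rs d
  sorted : L.Pairwise fun P P' =>
    ∀ c ∈ P, ∀ d ∈ P', BoolListLexLt (memPattern Rs c) (memPattern Rs d)

lemma mem_refineStep {L : List (Finset α)} {S P : Finset α} :
    P ∈ refineStep L S ↔ ∃ Q ∈ L, (P = Q \ S ∨ P = Q ∩ S) ∧ P.Nonempty := by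
  simp [refineStep, List.mem_filter]

lemma subset_of_mem_filter_sdiff_inter {Q S P : Finset α}
    (h : P ∈ [Q \ S, Q ∩ S].filter fun T => T.Nonempty) : P ⊆ Q := by
  rcases List.mem_pair.1 (List.mem_filter.1 h).1 with rfl | rfl
  exacts [Finset.sdiff_subset, Finset.inter_subset_left]

lemma IsSortedPatternPartition.refineStep {C : Finset α} {Rs L : List (Finset α)}
    (h : IsSortedPatternPartition C Rs L) (S : Finset α) :
    IsSortedPatternPartition C (Rs ++ [S]) (refineStep L S) where
  cover c hc := by
    obtain ⟨Q, hQ, hcQ⟩ := h.cover c hc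
    by_cases hcS : c ∈ S
    · have hc' : c ∈ Q ∩ S := Finset.mem_inter.2 ⟨hcQ, hcS⟩
      exact ⟨_, mem_refineStep.2 ⟨Q, hQ, .inr rfl, c, hc'⟩, hc'⟩
    · have hc' : c ∈ Q \ S := Finset.mem_sdiff.2 ⟨hcQ, hcS⟩
      exact ⟨_, mem_refineStep.2 ⟨Q, hQ, .inl rfl, c, hc'⟩, hc'⟩
  pattern_eq P hP c hc d hd := by
    obtain ⟨Q, hQ, rfl | rfl, -⟩ := mem_refineStep.1 hP
    all_goals
      simp only [Finset.mem_sdiff, Finset.mem_inter] at hc hd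
      rw [memPattern_append_singleton, memPattern_append_singleton,
        h.pattern_eq Q hQ c hc.1 d hd.1]
      simp [hc.2, hd.2]
  sorted := by
    rw [_root_.refineStep, List.pairwise_flatMap]
    constructor
    · intro Q hQ
      refine (List.pairwise_pair.2 fun c hc d hd => ?_).sublist List.filter_sublist
      simp only [Finset.mem_sdiff, Finset.mem_inter] at hc hd
      rw [memPattern_append_singleton, memPattern_append_singleton,
        h.pattern_eq Q hQ c hc.1 d hd.1, decide_eq_false hc.2, decide_eq_true hd.2]
      exact BoolListLexLt.append_false_true _
    · refine h.sorted.imp fun {Q Q'} hQQ' P hP P' hP' c hc d hd => ?_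
      rw [memPattern_append_singleton, memPattern_append_singleton]
      have hcQ := subset_of_mem_filter_sdiff_inter hP hc
      have hdQ' := subset_of_mem_filter_sdiff_inter hP' hd
      exact (hQQ' c hcQ d hdQ').append_singleton _ _

lemma isSortedPatternPartition_foldl_refineStep (C : Finset α) (Rs : List (Finset α)) :
    IsSortedPatternPartition C Rs (Rs.foldl refineStep [C]) := by
  induction Rs using List.reverseRecOn with
  | nil => exact ⟨fun c hc => ⟨C, by simp, hc⟩, by simp [memPattern], by simp⟩
  | append_singleton Rs S ih =>
    rw [List.foldl_append]
    exact ih.refineStep S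

lemma IsSortedPatternPartition.memPattern_eq_iff {C : Finset α} {Rs L : List (Finset α)}
    (h : IsSortedPatternPartition C Rs L) {c d : α} (hc : c ∈ C) (hd : d ∈ C) :
    memPattern Rs c = memPattern Rs d ↔ ∃ P ∈ L, c ∈ P ∧ d ∈ P := by
  refine ⟨fun hcd => ?_, fun ⟨P, hP, hcP, hdP⟩ => h.pattern_eq P hP c hcP d hdP⟩
  obtain ⟨P, hP, hcP⟩ := h.cover c hc
  obtain ⟨P', hP', hdP'⟩ := h.cover d hd
  have hsep : L.Pairwise fun P P' => ∀ c ∈ P, ∀ d ∈ P', memPattern Rs c ≠ memPattern Rs d :=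
    h.sorted.imp fun hPP' c hc d hd => (hPP' c hc d hd).ne
  have : Std.Symm fun P P' : Finset α => ∀ c ∈ P, ∀ d ∈ P', memPattern Rs c ≠ memPattern Rs d :=
    ⟨fun _ _ hPP' d hd c hc => (hPP' c hc d hd).symm⟩
  by_cases hPP' : P = P'
  · exact ⟨P, hP, hcP, hPP' ▸ hdP'⟩
  · exact absurd hcd (hsep.forall hP hP' hPP' c hcP d hdP')

end Refinement

theorem stmt18_general {α : Type*} [DecidableEq α] (C : Finset α) (m : ℕ)
    (R : Fin m → Finset α) :
    (∀ c ∈ C, ∀ d ∈ C,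
      (colVec m R c = colVec m R d ↔
        ∃ P ∈ (List.ofFn R).foldl refineStep [C], c ∈ P ∧ d ∈ P)) ∧
    (∀ p q : ℕ, p < q →
      ∀ (hp : p < ((List.ofFn R).foldl refineStep [C]).length)
        (hq : q < ((List.ofFn R).foldl refineStep [C]).length),
      ∀ c ∈ ((List.ofFn R).foldl refineStep [C]).get ⟨p, hp⟩,
      ∀ d ∈ ((List.ofFn R).foldl refineStep [C]).get ⟨q, hq⟩,
        LexLt (colVec m R c) (colVec m R d)) := by
  have h := isSortedPatternPartition_foldl_refineStep C (List.ofFn R)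
  refine ⟨fun c hc d hd => ?_, fun p q hpq hp hq c hc d hd => ?_⟩
  · rw [← h.memPattern_eq_iff hc hd, memPattern_ofFn, memPattern_ofFn, List.ofFn_inj]
  · have hlt := List.pairwise_iff_get.1 h.sorted ⟨p, hp⟩ ⟨q, hq⟩ hpq c hc d hd
    rw [memPattern_ofFn, memPattern_ofFn] at hlt
    exact hlt.lexLt_of_ofFn

/-- Refining the trivial partition of the columns by the rows taken in
decreasing size order yields the final partition in which two columns share a
part iff their column vectors are equal, and the parts are sorted in
lexicographic order of the column vectors. -/
theorem stmt18 {α : Type*} [DecidableEq α] (C : Finset α) (m : ℕ)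
    (R : Fin m → Finset α)
    (hsub : ∀ i, R i ⊆ C)
    (hdecr : ∀ i j : Fin m, i ≤ j → (R j).card ≤ (R i).card) :
    (∀ c ∈ C, ∀ d ∈ C,
      (colVec m R c = colVec m R d ↔
        ∃ P ∈ (List.ofFn R).foldl refineStep [C], c ∈ P ∧ d ∈ P)) ∧
    (∀ p q : ℕ, p < q →
      ∀ (hp : p < ((List.ofFn R).foldl refineStep [C]).length)
        (hq : q < ((List.ofFn R).foldl refineStep [C]).length),
      ∀ c ∈ ((List.ofFn R).foldl refineStep [C]).get ⟨p, hp⟩,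
      ∀ d ∈ ((List.ofFn R).foldl refineStep [C]).get ⟨q, hq⟩,
        LexLt (colVec m R c) (colVec m R d)) :=
  stmt18_general C m R
end

section
/- Characterization of Max via column vectors: let rows be sorted in decreasing size (order LR) and regard each column c as the 0-1 vector of memberships. For a row R₁ with leftmost column l = left(R₁) and rightmost column r = right(R₁) in lexicographic column order, Max(R₁) ≠ ∅ (some earlier row overlaps R₁) if and only if there exists a row R with R ≤_LR R₁ in LR order such that c_l ∉ R and c_r ∈ R. -/
/-!
In the lexicographic order of column vectors, the columns of `R₁` lie between `l` and `r`. If no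
row up to `R₁` contains `r` but not `l`, then the vectors of `l` and `r` agree on all rows up to
`R₁`, hence so does every column of `R₁` in between; so each earlier row meets `R₁` in all of it
or in nothing, and overlaps nothing. Conversely a row `R` containing `r` but not `l` meets `R₁`
without containing it, and since `|R| ≥ |R₁|` it cannot be contained in `R₁` either.
-/

open Set

namespace Pi

variable {ι : Type*} [LinearOrder ι] [WellFoundedLT ι] {β : Type*} [LinearOrder β]
  {f g h : ι → β} {i : ι}

theorem eqOn_Iic_of_toLex_le (hfg : toLex f ≤ toLex g) (hi : ∀ j ≤ i, ¬ f j < g j) :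
    EqOn f g (Iic i) := by
  intro j
  induction j using WellFoundedLT.induction with
  | _ j ih =>
    intro hj
    have hlt : ∀ k < j, f k = g k := fun k hk => ih k hk (hk.le.trans hj)
    exact (apply_le_of_toLex hfg hlt).eq_of_not_lt (hi j hj)

theorem eqOn_Iic_of_toLex_le_of_le (hfg : toLex f ≤ toLex g) (hgh : toLex g ≤ toLex h)
    (hfh : EqOn f h (Iic i)) : EqOn f g (Iic i) := by
  intro j
  induction j using WellFoundedLT.induction with
  | _ j ih =>
    intro hj
    have hfg_lt : ∀ k < j, f k = g k := fun k hk => ih k hk (hk.le.trans hj)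
    have hgh_lt : ∀ k < j, g k = h k := fun k hk =>
      (hfg_lt k hk).symm.trans (hfh (hk.le.trans hj))
    exact (apply_le_of_toLex hfg hfg_lt).antisymm
      ((apply_le_of_toLex hgh hgh_lt).trans (hfh hj).ge)

end Pi

theorem lexLt_iff_toLex_lt {m : ℕ} {f g : Fin m → Bool} : LexLt f g ↔ toLex f < toLex g := by
  show _ ↔ ∃ i, (∀ j < i, f j = g j) ∧ f i < g i
  simp only [LexLt, Bool.lt_iff]

section Overlaps

variable {α : Type*} [DecidableEq α] {A B : Finset α}

theorem Overlaps.exists_mem_and_not_mem (h : Overlaps A B) : ∃ x ∈ B, ∃ y ∈ B, x ∈ A ∧ y ∉ A := by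
  obtain ⟨⟨x, hx⟩, -, ⟨y, hy⟩⟩ := h
  rw [Finset.mem_inter] at hx
  rw [Finset.mem_sdiff] at hy
  exact ⟨x, hx.2, y, hy.1, hx.1, hy.2⟩

theorem overlaps_of_card_le {l r : α} (hrA : r ∈ A) (hrB : r ∈ B) (hlA : l ∉ A) (hlB : l ∈ B)
    (hcard : B.card ≤ A.card) : Overlaps A B := by
  refine ⟨⟨r, Finset.mem_inter.mpr ⟨hrA, hrB⟩⟩, ?_, ⟨l, Finset.mem_sdiff.mpr ⟨hlB, hlA⟩⟩⟩
  rw [Finset.sdiff_nonempty]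
  intro hAB
  exact hlA (Finset.eq_of_subset_of_card_le hAB hcard ▸ hlB)

end Overlaps

theorem colVec_eqOn_Iic_of_mem {α : Type*} [DecidableEq α] {m : ℕ} {R : Fin m → Finset α}
    {i₁ : Fin m} {l r : α}
    (hl : l ∈ R i₁ ∧ ∀ c ∈ R i₁, ¬ LexLt (colVec m R c) (colVec m R l))
    (hr : r ∈ R i₁ ∧ ∀ c ∈ R i₁, ¬ LexLt (colVec m R r) (colVec m R c))
    (hlr : ∀ j ≤ i₁, l ∉ R j → r ∉ R j) {c : α} (hc : c ∈ R i₁) :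
    EqOn (colVec m R l) (colVec m R c) (Iic i₁) := by
  simp only [lexLt_iff_toLex_lt] at hl hr
  have hlr_eq : EqOn (colVec m R l) (colVec m R r) (Iic i₁) := by
    refine Pi.eqOn_Iic_of_toLex_le (not_lt.mp (hl.2 r hr.1)) fun j hj hlt => ?_
    simp only [colVec, Bool.lt_iff, decide_eq_false_iff_not, decide_eq_true_eq] at hlt
    exact hlr j hj hlt.1 hlt.2
  exact Pi.eqOn_Iic_of_toLex_le_of_le (not_lt.mp (hl.2 c hc)) (not_lt.mp (hr.2 c hc)) hlr_eq

/-- Characterization of `Max`: with rows `R 0, …, R (m-1)` listed in the LR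
order (sizes non-increasing), and `l`/`r` a leftmost/rightmost column of the
row `R i₁` in the lexicographic order of column vectors, some row strictly
earlier in LR order overlaps `R i₁` iff some row `R j` with `j ≤ i₁` satisfies
`l ∉ R j` and `r ∈ R j`. -/
theorem stmt19 {α : Type*} [DecidableEq α] (m : ℕ) (R : Fin m → Finset α)
    (hdecr : ∀ i j : Fin m, i ≤ j → (R j).card ≤ (R i).card)
    (i₁ : Fin m) (l r : α)
    (hl : l ∈ R i₁ ∧ ∀ c ∈ R i₁, ¬ LexLt (colVec m R c) (colVec m R l))
    (hr : r ∈ R i₁ ∧ ∀ c ∈ R i₁, ¬ LexLt (colVec m R r) (colVec m R c)) :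
    (∃ j : Fin m, j < i₁ ∧ Overlaps (R j) (R i₁)) ↔
    (∃ j : Fin m, j ≤ i₁ ∧ l ∉ R j ∧ r ∈ R j) := by
  constructor
  · rintro ⟨j, hj, hov⟩
    by_contra! hlr
    obtain ⟨x, hx, y, hy, hxj, hyj⟩ := hov.exists_mem_and_not_mem
    have hx_eq := colVec_eqOn_Iic_of_mem hl hr hlr hx (mem_Iic.mpr hj.le)
    have hy_eq := colVec_eqOn_Iic_of_mem hl hr hlr hy (mem_Iic.mpr hj.le)
    simp only [colVec, decide_eq_decide] at hx_eq hy_eq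
    exact hyj (hy_eq.mp (hx_eq.mpr hxj))
  · rintro ⟨j, hj, hlj, hrj⟩
    have hj_lt : j < i₁ := hj.lt_of_ne (by rintro rfl; exact hlj hl.1)
    exact ⟨j, hj_lt, overlaps_of_card_le hrj hr.1 hlj hl.1 (hdecr j i₁ hj)⟩
end
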